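/- There exists a homogeneous polynomial S ∈ ℂ[x,y,z] of degree d such that P − Q = (x − y)·S; in particular the fiber of F over the value 1 is reducible. -/

import Mathlib

open MvPolynomial

/-- The linear form `R_k = (2d+1-k)x + ky - k(2d+1-k)z` in `ℂ[x,y,z]`. -/
noncomputable def R3 (d k : ℕ) : MvPolynomial (Fin 3) ℂ :=
  C (2*(d:ℂ)+1-(k:ℂ)) * X 0 + C (k:ℂ) * X 1 - C ((k:ℂ)*(2*(d:ℂ)+1-(k:ℂ))) * X 2

/-- `P = ∏_{k=0}^{d} R_k`. -/
noncomputable def P3 (d : ℕ) : MvPolynomial (Fin 3) ℂ :=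
  ∏ k ∈ Finset.range (d+1), R3 d k

/-- `Q = ∏_{k=d+1}^{2d+1} R_k`. -/
noncomputable def Q3 (d : ℕ) : MvPolynomial (Fin 3) ℂ :=
  ∏ k ∈ Finset.Icc (d+1) (2*d+1), R3 d k

/-!
On the line `x = y` the form `R_k` becomes `(2d+1)y - k(2d+1-k)z`, which is invariant under
`k ↦ 2d+1-k`; this reflection exchanges the index sets of `P` and `Q`, so `P - Q` vanishes on
`x = y` and is divisible by `x - y`. As `P - Q` is homogeneous of degree `d + 1`, the cofactor
can be replaced by its homogeneous component of degree `d`.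
-/

open Finset

namespace MvPolynomial

variable {σ R : Type*} [CommRing R]

theorem sub_algHom_mem_of_forall_X_sub_mem {I : Ideal (MvPolynomial σ R)}
    (φ : MvPolynomial σ R →ₐ[R] MvPolynomial σ R) (h : ∀ k, X k - φ (X k) ∈ I)
    (p : MvPolynomial σ R) : p - φ p ∈ I := by
  have hφ : (Ideal.Quotient.mkₐ R I).comp φ = Ideal.Quotient.mkₐ R I :=
    algHom_ext fun k => by simpa using (Ideal.Quotient.eq.2 (h k)).symm
  exact Ideal.Quotient.eq.1 (by simpa using (AlgHom.congr_fun hφ p).symm)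

theorem X_sub_X_dvd_sub_aeval_update [DecidableEq σ] (i j : σ) (p : MvPolynomial σ R) :
    X i - X j ∣ p - aeval (Function.update X i (X j)) p := by
  rw [← Ideal.mem_span_singleton]
  refine sub_algHom_mem_of_forall_X_sub_mem _ (fun k => ?_) p
  rcases eq_or_ne k i with rfl | hk
  · simp
  · simp [hk]

theorem X_sub_X_dvd_of_aeval_update_eq_zero [DecidableEq σ] {i j : σ} {p : MvPolynomial σ R}
    (hp : aeval (Function.update (X : σ → MvPolynomial σ R) i (X j)) p = 0) :
    X i - X j ∣ p := by
  simpa only [hp, sub_zero] using X_sub_X_dvd_sub_aeval_update i j p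

attribute [local instance] gradedAlgebra in
theorem homogeneousComponent_mul_of_isHomogeneous_left {φ : MvPolynomial σ R} {i : ℕ}
    (hφ : φ.IsHomogeneous i) (j : ℕ) (ψ : MvPolynomial σ R) :
    homogeneousComponent (i + j) (φ * ψ) = φ * homogeneousComponent j ψ := by
  simp only [← decomposition.decompose'_apply]
  exact DirectSum.coe_decompose_mul_add_of_left_mem _ ((mem_homogeneousSubmodule _ _).2 hφ)

theorem IsHomogeneous.exists_eq_mul_of_dvd {φ f : MvPolynomial σ R} {i j : ℕ}
    (hφ : φ.IsHomogeneous i) (hf : f.IsHomogeneous (i + j)) (h : φ ∣ f) :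
    ∃ ψ : MvPolynomial σ R, ψ.IsHomogeneous j ∧ f = φ * ψ := by
  obtain ⟨ψ, rfl⟩ := h
  refine ⟨homogeneousComponent j ψ, homogeneousComponent_isHomogeneous j ψ, ?_⟩
  rw [← homogeneousComponent_mul_of_isHomogeneous_left hφ, homogeneousComponent_of_mem hf,
    if_pos rfl]

end MvPolynomial

theorem isHomogeneous_prod_R3 (d : ℕ) (s : Finset ℕ) :
    (∏ k ∈ s, R3 d k).IsHomogeneous #s := by
  simpa using IsHomogeneous.prod s (R3 d) (fun _ => 1) fun k _ =>
    (((isHomogeneous_C_mul_X _ _).add (isHomogeneous_C_mul_X _ _)).sub (isHomogeneous_C_mul_X _ _))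

theorem isHomogeneous_P3 (d : ℕ) : (P3 d).IsHomogeneous (d + 1) := by
  simpa [P3] using isHomogeneous_prod_R3 d (range (d + 1))

theorem isHomogeneous_Q3 (d : ℕ) : (Q3 d).IsHomogeneous (d + 1) := by
  have h := isHomogeneous_prod_R3 d (Icc (d + 1) (2 * d + 1))
  rwa [Nat.card_Icc, show 2 * d + 1 + 1 - (d + 1) = d + 1 by omega] at h

noncomputable abbrev substXY : MvPolynomial (Fin 3) ℂ →ₐ[ℂ] MvPolynomial (Fin 3) ℂ :=
  aeval (Function.update X 0 (X 1))

theorem substXY_R3 (d k : ℕ) :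
    substXY (R3 d k) = C (2 * (d : ℂ) + 1) * X 1 - C ((k : ℂ) * (2 * d + 1 - k)) * X 2 := by
  simp only [R3, map_sub, map_add, map_mul, aeval_C, aeval_X, algebraMap_eq, Function.update_self,
    Function.update_of_ne (show (1 : Fin 3) ≠ 0 by decide),
    Function.update_of_ne (show (2 : Fin 3) ≠ 0 by decide)]
  ring

theorem substXY_R3_reflect (d k : ℕ) (hk : k ≤ 2 * d + 1) :
    substXY (R3 d (2 * d + 1 - k)) = substXY (R3 d k) := by
  rw [substXY_R3, substXY_R3, Nat.cast_sub hk]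
  push_cast
  ring_nf

theorem substXY_P3_eq_substXY_Q3 (d : ℕ) : substXY (P3 d) = substXY (Q3 d) := by
  rw [P3, Q3, map_prod, map_prod]
  refine prod_nbij' (fun k => 2 * d + 1 - k) (fun k => 2 * d + 1 - k) ?_ ?_ ?_ ?_ ?_ <;>
    intro k hk <;> simp only [mem_range, mem_Icc] at hk ⊢ <;> try omega
  exact (substXY_R3_reflect d k (by omega)).symm

theorem stmt8_general (d : ℕ) :
    ∃ S : MvPolynomial (Fin 3) ℂ, S.IsHomogeneous d ∧
      P3 d - Q3 d = (X 0 - X 1) * S := by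
  have hdvd : X 0 - X 1 ∣ P3 d - Q3 d :=
    X_sub_X_dvd_of_aeval_update_eq_zero (by rw [map_sub, substXY_P3_eq_substXY_Q3, sub_self])
  have hhom : (P3 d - Q3 d).IsHomogeneous (1 + d) :=
    add_comm d 1 ▸ (isHomogeneous_P3 d).sub (isHomogeneous_Q3 d)
  exact ((isHomogeneous_X ℂ 0).sub (isHomogeneous_X ℂ 1)).exists_eq_mul_of_dvd hhom hdvd

/-- There is a homogeneous polynomial `S` of degree `d` with `P - Q = (x - y)·S`;
in particular the fiber of `F = P/Q` over `1` is reducible. -/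
theorem stmt8 (d : ℕ) (hd : 1 ≤ d) :
    ∃ S : MvPolynomial (Fin 3) ℂ, S.IsHomogeneous d ∧
      P3 d - Q3 d = (X 0 - X 1) * S :=
  stmt8_general d
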